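/- Let $n, d, p$ be integers with $0 \le d < n$ and $1 \le p \le n-d$. Let $\tau \in \bar{\mathcal{S}}_p(n,d)$ and let $B$ be a $+$-subset of $\tau$. Let $i$ be the largest index in $[d]$ such that the $(\tau,B,i)$-series is left-aligned, or $i = 0$ if no such index exists. Then $B$ is contained in the $+$-component $\mathcal{C}^{\tau}_i$. -/

import Mathlib

/-! Common definitions: signotopes and co-signotopes on `[n] = {1, …, n}` (encoded as
`Finset.Icc 1 n` in `ℕ`), sign functions are `Finset ℕ → Bool` (`true` = `+`, `false` = `-`)
that vanish (are `-`) away from the relevant subsets. -/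

open Classical in
/-- The sign function with `+`-set `S` (and `-` elsewhere). -/
noncomputable def ofPlusSet (S : Set (Finset ℕ)) : Finset ℕ → Bool :=
  fun A => if A ∈ S then true else false

/-- Number of sign changes in a list of signs. -/
def signChanges (l : List Bool) : ℕ :=
  ((l.zip l.tail).filter fun p => p.1 ≠ p.2).length

/-- Number of `+`-subsets of a sign function. -/
noncomputable def plusCount (τ : Finset ℕ → Bool) : ℕ :=
  {A : Finset ℕ | τ A = true}.ncard

/-- The series of signs `τ (C ∪ {x})` for `x ∈ [n] \ C` in increasing order.
For a `d`-subset `B` with `i`-th smallest element `b`, `series n τ (B.erase b)` is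
the `(τ,B,i)`-series. -/
def series (n : ℕ) (τ : Finset ℕ → Bool) (C : Finset ℕ) : List Bool :=
  ((Finset.Icc 1 n \ C).sort (· ≤ ·)).map fun x => τ (insert x C)

/-- An `r`-signotope on `[n]`, encoded as a sign function on all of `Finset ℕ`
which is `-` away from the `r`-subsets of `[n]`. -/
def IsSignotope (n r : ℕ) (σ : Finset ℕ → Bool) : Prop :=
  (∀ A, σ A = true → A ⊆ Finset.Icc 1 n ∧ A.card = r) ∧
  ∀ X : Finset ℕ, X ⊆ Finset.Icc 1 n → X.card = r + 1 →
    signChanges ((X.sort (· ≤ ·)).map fun x => σ (X.erase x)) ≤ 1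

/-- A `d`-co-signotope on `[n]`: every `(τ,B,i)`-series has at most one sign change. -/
def IsCoSignotope (n d : ℕ) (τ : Finset ℕ → Bool) : Prop :=
  (∀ A, τ A = true → A ⊆ Finset.Icc 1 n ∧ A.card = d) ∧
  ∀ B : Finset ℕ, B ⊆ Finset.Icc 1 n → B.card = d → ∀ b ∈ B,
    signChanges (series n τ (B.erase b)) ≤ 1

/-- `𝒮_p(n,r)`: `r`-signotopes on `[n]` with exactly `p` `+`-signs. -/
noncomputable def sigSet (n r p : ℕ) : Set (Finset ℕ → Bool) :=
  {σ | IsSignotope n r σ ∧ plusCount σ = p}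

/-- `𝒮_{≤p}(n,r)`. -/
noncomputable def sigSetLe (n r p : ℕ) : Set (Finset ℕ → Bool) :=
  {σ | IsSignotope n r σ ∧ plusCount σ ≤ p}

/-- `𝒮̄_p(n,d)`: `d`-co-signotopes on `[n]` with exactly `p` `+`-subsets. -/
noncomputable def coSigSet (n d p : ℕ) : Set (Finset ℕ → Bool) :=
  {τ | IsCoSignotope n d τ ∧ plusCount τ = p}

/-- `𝒮̄_{≤p}(n,d)`. -/
noncomputable def coSigSetLe (n d p : ℕ) : Set (Finset ℕ → Bool) :=
  {τ | IsCoSignotope n d τ ∧ plusCount τ ≤ p}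

/-- `σ` and `τ` differ by a single step: `σ⁻¹(+) ⊊ τ⁻¹(+)` and `|τ⁻¹(+)| = |σ⁻¹(+)| + 1`. -/
noncomputable def SingleStep (σ τ : Finset ℕ → Bool) : Prop :=
  {A | σ A = true} ⊂ {A | τ A = true} ∧ plusCount τ = plusCount σ + 1

/-- The higher Bruhat order on `r`-signotopes on `[n]`: reflexive-transitive closure of
the single step relation. -/
noncomputable def BruhatLe (n r : ℕ) (σ τ : Finset ℕ → Bool) : Prop :=
  Relation.ReflTransGen (fun a b => IsSignotope n r a ∧ IsSignotope n r b ∧ SingleStep a b) σ τ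

/-- The complementary higher Bruhat order on `d`-co-signotopes on `[n]`. -/
noncomputable def CoBruhatLe (n d : ℕ) (σ τ : Finset ℕ → Bool) : Prop :=
  Relation.ReflTransGen (fun a b => IsCoSignotope n d a ∧ IsCoSignotope n d b ∧ SingleStep a b) σ τ

/-- Adjacency in the graph `G_{n,d}`: `B' = (B \ {x}) ∪ {y}` with no element of `B \ {x}`
strictly between `x` and `y`. -/
def GAdj (n d : ℕ) (B B' : Finset ℕ) : Prop :=
  B ⊆ Finset.Icc 1 n ∧ B.card = d ∧ B' ⊆ Finset.Icc 1 n ∧ B'.card = d ∧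
  ∃ x ∈ B, ∃ y ∈ Finset.Icc 1 n, y ∉ B ∧ B' = insert y (B.erase x) ∧
    ∀ z ∈ B.erase x, ¬(min x y < z ∧ z < max x y)

/-- The source subset `S_{n,d,i} = {1,…,i} ∪ {n-d+i+1,…,n}`. -/
def sourceSubset (n d i : ℕ) : Finset ℕ :=
  Finset.Icc 1 i ∪ Finset.Icc (n - d + i + 1) n

/-- Connectivity inside the `+`-subsets of `τ` (the induced subgraph `G_{n,d}[τ]`). -/
def plusConn (n d : ℕ) (τ : Finset ℕ → Bool) : Finset ℕ → Finset ℕ → Prop :=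
  Relation.ReflTransGen fun A A' => τ A = true ∧ τ A' = true ∧ GAdj n d A A'

/-- The vertex set `𝒞^τ_i` of the `+`-component of `τ` containing `S_{n,d,i}`
(empty if `S_{n,d,i}` is not a `+`-subset). -/
def comp (n d : ℕ) (τ : Finset ℕ → Bool) (i : ℕ) : Set (Finset ℕ) :=
  {B | τ (sourceSubset n d i) = true ∧ τ B = true ∧ plusConn n d τ (sourceSubset n d i) B}

/-- The `j`-th smallest element (1-based) of a finite set of naturals. -/
def nthElt (B : Finset ℕ) (j : ℕ) : ℕ := (B.sort (· ≤ ·)).getD (j - 1) 0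

/-- `b_j` with the conventions `b_0 = 0` and `b_{d+1} = n+1` (as an integer). -/
def extNth (n d : ℕ) (B : Finset ℕ) (j : ℕ) : ℤ :=
  if j = 0 then 0 else if j ≤ d then (nthElt B j : ℤ) else (n : ℤ) + 1

/-- A series is left-aligned if it starts with `+` and ends with `-`. -/
def LeftAligned (l : List Bool) : Prop :=
  l.head? = some true ∧ l.getLast? = some false

/-- A series is right-aligned if it starts with `-` and ends with `+`. -/
def RightAligned (l : List Bool) : Prop :=
  l.head? = some false ∧ l.getLast? = some true

/-- `𝒮̄_{p,i}(n,d)`: co-signotopes in `𝒮̄_p(n,d)` whose only nonempty `+`-component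
is `𝒞^τ_i` (i.e. every `+`-subset lies in `𝒞^τ_i`). -/
noncomputable def coSigOnly (n d p i : ℕ) : Set (Finset ℕ → Bool) :=
  {τ | IsCoSignotope n d τ ∧ plusCount τ = p ∧ ∀ B, τ B = true → B ∈ comp n d τ i}

/-- `Z(d,i)`: points `(a_1,…,a_d) ∈ ℤ_{>0}^d` (0-indexed in Lean) with `a_j ≥ a_{j-1}`
for `j ∈ [2,i]` and `a_j ≥ a_{j+1}` for `j ∈ [i+1,d-1]` (1-based indices). -/
def ZSet (d i : ℕ) : Set (Fin d → ℤ) :=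
  {a | (∀ j, 0 < a j) ∧
    (∀ j k : Fin d, (j : ℕ) + 1 = (k : ℕ) → (k : ℕ) + 1 ≤ i → a j ≤ a k) ∧
    (∀ j k : Fin d, (j : ℕ) + 1 = (k : ℕ) → i ≤ (j : ℕ) → a k ≤ a j)}

/-- A `(d,i)`-Ferrers diagram with respect to `p`. -/
def IsFerrers (d i p : ℕ) (F : Set (Fin d → ℤ)) : Prop :=
  F ⊆ ZSet d i ∧ F.ncard = p ∧
  ∀ a ∈ F, ∀ a' ∈ ZSet d i, (∀ j, a' j ≤ a j) → a' ∈ F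

/-- The number of `(d,i)`-Ferrers diagrams with respect to `p`. -/
noncomputable def ferrersCount (d i p : ℕ) : ℕ :=
  {F : Set (Fin d → ℤ) | IsFerrers d i p F}.ncard

/-- `f_{n,d,i,j}` (here `j` is the 1-based coordinate index). -/
def fFun (n d i j : ℕ) (x : ℕ) : ℤ :=
  if j ≤ i then (x : ℤ) - j + 1 else ((n : ℤ) - x) - ((d : ℤ) - j) + 1

/-- `g_{n,d,i}` maps a `d`-subset `B = (b_1 < … < b_d)` to
`(f_{n,d,i,1}(b_1), …, f_{n,d,i,d}(b_d))`. -/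
def gMap (n d i : ℕ) (B : Finset ℕ) : Fin d → ℤ :=
  fun k => fFun n d i ((k : ℕ) + 1) (nthElt B ((k : ℕ) + 1))

/-- A sparse composition of `p` of length `d+1`. -/
def IsSparseComposition (d p : ℕ) (c : Fin (d + 1) → ℕ) : Prop :=
  (∑ i, c i) = p ∧
  ∀ i : Fin (d + 1), 1 ≤ (i : ℕ) →
    c i = 0 ∨ c ⟨(i : ℕ) - 1, lt_of_le_of_lt (Nat.sub_le _ _) i.isLt⟩ = 0

/-- The component `τ_i` of the `+`-component decomposition `Δ(τ)`:
the sign function whose `+`-set is `𝒞^τ_i`. -/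
noncomputable def compFun (n d : ℕ) (τ : Finset ℕ → Bool) (i : ℕ) : Finset ℕ → Bool :=
  ofPlusSet (comp n d τ i)

/-- Keep the `i` smallest elements of `B` and shift the others by `ñ - n`
(this is `g⁻¹_{ñ,d,i} ∘ g_{n,d,i}` on `d`-subsets). -/
def gammaSet (n tn i : ℕ) (B : Finset ℕ) : Finset ℕ :=
  ((B.sort (· ≤ ·)).mapIdx fun k x => if k < i then x else x + tn - n).toFinset

/-- The map `h_{n,ñ,d,p,i}` on sign functions. -/
noncomputable def hFun (n tn i : ℕ) (τ : Finset ℕ → Bool) : Finset ℕ → Bool :=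
  ofPlusSet {A | ∃ B, τ B = true ∧ A = gammaSet n tn i B}

open Classical in
/-- `γ_{τ,ñ}(B)`: replace `b_j` by `b_j + ñ - n` whenever the `(τ,B,j)`-series is
right-aligned. -/
noncomputable def gammaFun (n tn : ℕ) (τ : Finset ℕ → Bool) (B : Finset ℕ) : Finset ℕ :=
  B.image fun x => if RightAligned (series n τ (B.erase x)) then x + tn - n else x

/-- The simple bijection `φ_{n,ñ,d,p}` on sign functions. -/
noncomputable def phiFun (n tn : ℕ) (τ : Finset ℕ → Bool) : Finset ℕ → Bool :=
  ofPlusSet {A | ∃ B, τ B = true ∧ A = gammaFun n tn τ B}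

/-!
For `c ∈ B` the `(τ,B,c)`-series is `+` at `c` and has at most one sign change, so it is `+` on a
whole side of `c`: `c` points down (`PlusBelow`) if the series is left-aligned and up
(`PlusAbove`) otherwise. Pointing in crossing directions would yield at least `n - d + 2`
`+`-subsets obtained by exchanging one element, at most one of them counted twice, which is
impossible as `p ≤ n - d`. Hence every element below a downward one points down, and moving an
element of `B` one step in the direction it points, to a free position, stays among `+`-subsets
and changes no other direction. So `B` walks inside its `+`-component, its `i` downward elements
moving down and the others up, until it becomes `S_{n,d,i}`.
-/

open Finset

theorem signChanges_cons_cons (a b : Bool) (l : List Bool) :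
    signChanges (a :: b :: l) = (if a ≠ b then 1 else 0) + signChanges (b :: l) := by
  by_cases h : a = b <;> simp [signChanges, h, Nat.add_comm]

theorem isChain_of_signChanges_le_one :
    ∀ l : List Bool, (signChanges l = 0 → l.IsChain (· ≤ ·) ∧ l.IsChain (· ≥ ·)) ∧
      (signChanges l ≤ 1 → l.IsChain (· ≤ ·) ∨ l.IsChain (· ≥ ·))
  | [] => by simp
  | [_] => by simp
  | a :: b :: l => by
    obtain ⟨ih₀, ih₁⟩ := isChain_of_signChanges_le_one (b :: l)
    simp only [signChanges_cons_cons, List.isChain_cons_cons]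
    by_cases hab : a = b
    · subst hab
      simp only [ne_eq, not_true_eq_false, if_false, zero_add, le_refl, true_and]
      exact ⟨ih₀, ih₁⟩
    · simp only [ne_eq, hab, not_false_eq_true, if_true]
      refine ⟨by omega, fun h => ?_⟩
      obtain ⟨hle, hge⟩ := ih₀ (by omega)
      rcases le_total a b with h' | h'
      exacts [Or.inl ⟨h', hle⟩, Or.inr ⟨h', hge⟩]

theorem rel_of_pairwise_sort {α : Type*} [LinearOrder α] {s : Finset α} {R : α → α → Prop}
    (h : s.sort.Pairwise R) {a b : α} (ha : a ∈ s) (hb : b ∈ s) (hab : a < b) : R a b := by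
  obtain ⟨i, hi, rfl⟩ := List.mem_iff_getElem.mp ((mem_sort (· ≤ ·)).mpr ha)
  obtain ⟨j, hj, rfl⟩ := List.mem_iff_getElem.mp ((mem_sort (· ≤ ·)).mpr hb)
  exact List.pairwise_iff_getElem.mp h i j hi hj (s.sortedLT_sort.getElem_lt_getElem_iff.mp hab)

theorem monotoneOn_or_antitoneOn_of_signChanges_le_one {α : Type*} [LinearOrder α] {s : Finset α}
    {f : α → Bool}
    (h : signChanges (s.sort.map f) ≤ 1) : MonotoneOn f s ∨ AntitoneOn f s := by
  have hrel : ∀ R : Bool → Bool → Prop, [Trans R R R] → [Std.Refl R] →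
      (s.sort.map f).IsChain R → ∀ a ∈ s, ∀ b ∈ s, a ≤ b → R (f a) (f b) := by
    intro R _ _ hR a ha b hb hab
    rcases hab.eq_or_lt with rfl | hlt
    · exact refl _
    · exact rel_of_pairwise_sort (List.pairwise_map.mp (List.isChain_iff_pairwise.mp hR)) ha hb hlt
  exact ((isChain_of_signChanges_le_one _).2 h).imp
    (fun hR a ha b hb => hrel _ hR a ha b hb) (fun hR a ha b hb => hrel _ hR a ha b hb)

theorem apply_eq_of_monotoneOn_or_antitoneOn {α β : Type*} [Preorder α] [PartialOrder β]
    {S : Set α} {f : α → β} (hf : MonotoneOn f S ∨ AntitoneOn f S) {a b c : α}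
    (ha : a ∈ S) (hb : b ∈ S) (hc : c ∈ S) (hab : a ≤ b) (hbc : b ≤ c) (hac : f a = f c) :
    f b = f a := by
  rcases hf with hf | hf
  · exact le_antisymm (hac ▸ hf hb hc hbc) (hf ha hb hab)
  · exact le_antisymm (hf ha hb hab) (hac ▸ hf hb hc hbc)

/-- With `C = B \ {c}` and `a = c`: the `(τ,B,c)`-series is `+` at every position up to `c`
(`PlusAbove`: from `c` on). -/
def PlusBelow (τ : Finset ℕ → Bool) (C : Finset ℕ) (a : ℕ) : Prop :=
  ∀ x ∈ Icc 1 a \ C, τ (insert x C) = true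

def PlusAbove (n : ℕ) (τ : Finset ℕ → Bool) (C : Finset ℕ) (a : ℕ) : Prop :=
  ∀ x ∈ Icc a n \ C, τ (insert x C) = true

theorem mem_Icc_sdiff_mono {C : Finset ℕ} {a b a' b' x : ℕ} (h : x ∈ Icc a b \ C) (ha : a' ≤ a)
    (hb : b ≤ b') : x ∈ Icc a' b' \ C :=
  sdiff_subset_sdiff (Icc_subset_Icc ha hb) le_rfl h

theorem PlusBelow.mono {τ : Finset ℕ → Bool} {C : Finset ℕ} {a a' : ℕ} (h : PlusBelow τ C a)
    (ha : a' ≤ a) : PlusBelow τ C a' :=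
  fun x hx => h x (mem_Icc_sdiff_mono hx le_rfl ha)

theorem PlusAbove.mono {n : ℕ} {τ : Finset ℕ → Bool} {C : Finset ℕ} {a a' : ℕ}
    (h : PlusAbove n τ C a) (ha : a ≤ a') : PlusAbove n τ C a' :=
  fun x hx => h x (mem_Icc_sdiff_mono hx ha le_rfl)

theorem leftAligned_series_iff {n : ℕ} {τ : Finset ℕ → Bool} {C : Finset ℕ}
    (h : (Icc 1 n \ C).Nonempty) :
    LeftAligned (series n τ C) ↔
      τ (insert ((Icc 1 n \ C).min' h) C) = true ∧ τ (insert ((Icc 1 n \ C).max' h) C) = false := by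
  have hhead : (Icc 1 n \ C).sort.head? = some ((Icc 1 n \ C).min' h) := by
    rw [List.head?_eq_getElem?, min'_eq_sorted_zero]; simp
  have hlast : (Icc 1 n \ C).sort.getLast? = some ((Icc 1 n \ C).max' h) := by
    rw [List.getLast?_eq_getElem?, max'_eq_sorted_last]; simp
  rw [LeftAligned, series, List.head?_map, List.getLast?_map, hhead, hlast]
  simp

section Rays

variable {n d : ℕ} {τ : Finset ℕ → Bool} {B : Finset ℕ} {c : ℕ}

theorem IsCoSignotope.monotoneOn_or_antitoneOn (hco : IsCoSignotope n d τ) (hB : τ B = true)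
    (hc : c ∈ B) :
    MonotoneOn (fun x => τ (insert x (B.erase c))) ↑(Icc 1 n \ B.erase c) ∨
      AntitoneOn (fun x => τ (insert x (B.erase c))) ↑(Icc 1 n \ B.erase c) :=
  monotoneOn_or_antitoneOn_of_signChanges_le_one
    (hco.2 B (hco.1 B hB).1 (hco.1 B hB).2 c hc)

theorem IsCoSignotope.mem_Icc_sdiff_erase (hco : IsCoSignotope n d τ) (hB : τ B = true)
    (hc : c ∈ B) : c ∈ Icc 1 n \ B.erase c :=
  mem_sdiff.mpr ⟨(hco.1 B hB).1 hc, notMem_erase c B⟩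

theorem IsCoSignotope.eq_true_of_eq_false (hco : IsCoSignotope n d τ) (hB : τ B = true)
    (hc : c ∈ B) {x₀ x : ℕ} (hx₀ : x₀ ∈ Icc 1 n \ B.erase c) (hx : x ∈ Icc 1 n \ B.erase c)
    (hside : x₀ ≤ c ∧ c ≤ x ∨ x ≤ c ∧ c ≤ x₀) (hx₀f : τ (insert x₀ (B.erase c)) = false) :
    τ (insert x (B.erase c)) = true := by
  by_contra hxf
  rw [Bool.not_eq_true] at hxf
  have hmono := hco.monotoneOn_or_antitoneOn hB hc
  have hcS := hco.mem_Icc_sdiff_erase hB hc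
  have hcf : τ (insert c (B.erase c)) = false := by
    rcases hside with ⟨h₁, h₂⟩ | ⟨h₁, h₂⟩
    · exact (apply_eq_of_monotoneOn_or_antitoneOn hmono (mem_coe.mpr hx₀) hcS hx h₁ h₂
        (hx₀f.trans hxf.symm)).trans hx₀f
    · exact (apply_eq_of_monotoneOn_or_antitoneOn hmono hx hcS (mem_coe.mpr hx₀) h₁ h₂
        (hxf.trans hx₀f.symm)).trans hxf
  rw [insert_erase hc, hB] at hcf
  exact Bool.noConfusion hcf

theorem IsCoSignotope.plusAbove_of_not_plusBelow (hco : IsCoSignotope n d τ) (hB : τ B = true)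
    (hc : c ∈ B) (h : ¬ PlusBelow τ (B.erase c) c) : PlusAbove n τ (B.erase c) c := by
  simp only [PlusBelow, not_forall, Bool.not_eq_true] at h
  obtain ⟨x₀, hx₀, hx₀f⟩ := h
  intro x hx
  have hcI := mem_Icc.mp ((hco.1 B hB).1 hc)
  exact hco.eq_true_of_eq_false hB hc (mem_Icc_sdiff_mono hx₀ le_rfl hcI.2)
    (mem_Icc_sdiff_mono hx hcI.1 le_rfl)
    (Or.inl ⟨(mem_Icc.mp (mem_sdiff.mp hx₀).1).2, (mem_Icc.mp (mem_sdiff.mp hx).1).1⟩) hx₀f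

theorem IsCoSignotope.plusBelow_of_not_plusAbove (hco : IsCoSignotope n d τ) (hB : τ B = true)
    (hc : c ∈ B) (h : ¬ PlusAbove n τ (B.erase c) c) : PlusBelow τ (B.erase c) c := by
  simp only [PlusAbove, not_forall, Bool.not_eq_true] at h
  obtain ⟨x₀, hx₀, hx₀f⟩ := h
  intro x hx
  have hcI := mem_Icc.mp ((hco.1 B hB).1 hc)
  exact hco.eq_true_of_eq_false hB hc (mem_Icc_sdiff_mono hx₀ hcI.1 le_rfl)
    (mem_Icc_sdiff_mono hx le_rfl hcI.2)
    (Or.inr ⟨(mem_Icc.mp (mem_sdiff.mp hx).1).2, (mem_Icc.mp (mem_sdiff.mp hx₀).1).1⟩) hx₀f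

theorem IsCoSignotope.plusBelow_of_leftAligned (hco : IsCoSignotope n d τ) (hB : τ B = true)
    (hc : c ∈ B) (h : LeftAligned (series n τ (B.erase c))) : PlusBelow τ (B.erase c) c := by
  have hS : (Icc 1 n \ B.erase c).Nonempty := ⟨c, hco.mem_Icc_sdiff_erase hB hc⟩
  have hcI := mem_Icc.mp ((hco.1 B hB).1 hc)
  intro x hx
  exact hco.eq_true_of_eq_false hB hc (max'_mem _ hS) (mem_Icc_sdiff_mono hx le_rfl hcI.2)
    (Or.inr ⟨(mem_Icc.mp (mem_sdiff.mp hx).1).2, le_max' _ c (hco.mem_Icc_sdiff_erase hB hc)⟩)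
    ((leftAligned_series_iff hS).mp h).2

theorem IsCoSignotope.plusAbove_of_not_leftAligned (hco : IsCoSignotope n d τ) (hB : τ B = true)
    (hc : c ∈ B) (h : ¬ LeftAligned (series n τ (B.erase c))) : PlusAbove n τ (B.erase c) c := by
  have hcS := hco.mem_Icc_sdiff_erase hB hc
  have hS : (Icc 1 n \ B.erase c).Nonempty := ⟨c, hcS⟩
  have hcI := mem_Icc.mp ((hco.1 B hB).1 hc)
  rw [leftAligned_series_iff hS, not_and, Bool.not_eq_false] at h
  intro x hx
  have hxS : x ∈ Icc 1 n \ B.erase c := mem_Icc_sdiff_mono hx hcI.1 le_rfl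
  have hcx : c ≤ x := (mem_Icc.mp (mem_sdiff.mp hx).1).1
  cases hmin : τ (insert ((Icc 1 n \ B.erase c).min' hS) (B.erase c))
  · exact hco.eq_true_of_eq_false hB hc (min'_mem _ hS) hxS (Or.inl ⟨min'_le _ c hcS, hcx⟩)
      hmin
  · have hmax := h hmin
    have := apply_eq_of_monotoneOn_or_antitoneOn (hco.monotoneOn_or_antitoneOn hB hc)
      (mem_coe.mpr hcS) (mem_coe.mpr hxS) (mem_coe.mpr (max'_mem _ hS)) hcx (le_max' _ x hxS)
      (by simp only [insert_erase hc, hB, hmax])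
    simpa [insert_erase hc, hB] using this

end Rays

section Counting

variable {n d : ℕ} {τ : Finset ℕ → Bool}

theorem IsCoSignotope.card_le_plusCount (hco : IsCoSignotope n d τ) {F : Finset (Finset ℕ)}
    (hF : ∀ A ∈ F, τ A = true) : #F ≤ plusCount τ := by
  have hfin : {A | τ A = true}.Finite :=
    (Icc 1 n).powerset.finite_toSet.subset fun A hA => mem_coe.mpr (mem_powerset.mpr (hco.1 A hA).1)
  rw [plusCount, ← Set.ncard_coe_finset]
  exact Set.ncard_le_ncard hF hfin

theorem IsCoSignotope.card_add_card_le (hco : IsCoSignotope n d τ) {C C' : Finset ℕ} {a a' : ℕ}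
    (A : Finset ℕ) (hlow : PlusBelow τ C a) (hhigh : PlusAbove n τ C' a')
    (hover : ∀ x ∈ Icc 1 a \ C, ∀ x' ∈ Icc a' n \ C',
      insert x C = insert x' C' → insert x C = A) :
    #(Icc 1 a \ C) + #(Icc a' n \ C') ≤ plusCount τ + 1 := by
  set F₁ := (Icc 1 a \ C).image (insert · C)
  set F₂ := (Icc a' n \ C').image (insert · C')
  have h₁ : #F₁ = #(Icc 1 a \ C) :=
    card_image_of_injOn fun x hx y _ h => (insert_inj (mem_sdiff.mp hx).2).mp h
  have h₂ : #F₂ = #(Icc a' n \ C') :=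
    card_image_of_injOn fun x hx y _ h => (insert_inj (mem_sdiff.mp hx).2).mp h
  have hinter : #(F₁ ∩ F₂) ≤ 1 := by
    refine (card_le_card (t := {A}) fun D hD => ?_).trans (card_singleton A).le
    obtain ⟨hD₁, hD₂⟩ := mem_inter.mp hD
    obtain ⟨x, hx, rfl⟩ := mem_image.mp hD₁
    obtain ⟨x', hx', hxx'⟩ := mem_image.mp hD₂
    exact mem_singleton.mpr (hover x hx x' hx' hxx'.symm)
  have hunion : #(F₁ ∪ F₂) ≤ plusCount τ := by
    refine hco.card_le_plusCount fun D hD => ?_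
    rcases mem_union.mp hD with hD | hD
    · obtain ⟨x, hx, rfl⟩ := mem_image.mp hD
      exact hlow x hx
    · obtain ⟨x, hx, rfl⟩ := mem_image.mp hD
      exact hhigh x hx
  have := card_union_add_card_inter F₁ F₂
  omega

end Counting

theorem sub_card_add_two_le {n : ℕ} {B : Finset ℕ} (hB : B ⊆ Icc 1 n) {a a' : ℕ} (ha : a ∈ B)
    (ha' : a' ∈ B) (h : a' ≤ a) :
    n - #B + 2 ≤ #(Icc 1 a \ B.erase a) + #(Icc a' n \ B.erase a') := by
  have haI := mem_Icc.mp (hB ha)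
  have ha'I := mem_Icc.mp (hB ha')
  rw [sdiff_erase (mem_Icc.mpr ⟨haI.1, le_rfl⟩), sdiff_erase (mem_Icc.mpr ⟨le_rfl, ha'I.2⟩),
    card_insert_of_notMem fun h => (mem_sdiff.mp h).2 ha,
    card_insert_of_notMem fun h => (mem_sdiff.mp h).2 ha']
  have hcover : Icc 1 n \ B ⊆ (Icc 1 a \ B) ∪ (Icc a' n \ B) := by
    refine union_sdiff_distrib (s₁ := Icc 1 a) .. ▸ sdiff_subset_sdiff (fun x hx => ?_) le_rfl
    simp only [mem_union, mem_Icc] at hx ⊢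
    omega
  have := (card_le_card hcover).trans (card_union_le _ _)
  rw [card_sdiff_of_subset hB, Nat.card_Icc] at this
  omega

theorem eq_of_insert_erase_eq {B B' : Finset ℕ} {c x x' : ℕ} (hx' : x' ∉ B'.erase c)
    (hB : x' ∈ B → x' ∈ B') (hxx' : x = x' → x' = c)
    (h : insert x (B.erase c) = insert x' (B'.erase c)) : x' = c := by
  rcases mem_insert.mp (h ▸ mem_insert_self x' (B'.erase c)) with h' | h'
  · exact hxx' h'.symm
  · by_contra hne
    exact hx' (mem_erase.mpr ⟨hne, hB (mem_of_mem_erase h')⟩)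

section Crossing

variable {n d : ℕ} {τ : Finset ℕ → Bool} {B B' : Finset ℕ} {c : ℕ}

/-- Otherwise `PlusAbove` holds at `c`, and the sets `B - t + x` (`x ≤ t`) and `B - c + x'`
(`x' ≥ c`) are at least `n - d + 2` `+`-subsets with only `B` in common. -/
theorem IsCoSignotope.plusBelow_of_le (hco : IsCoSignotope n d τ) (hp : plusCount τ + d ≤ n)
    (hB : τ B = true) {t : ℕ} (hc : c ∈ B) (ht : t ∈ B) (hct : c ≤ t)
    (h : PlusBelow τ (B.erase t) t) : PlusBelow τ (B.erase c) c := by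
  rcases hct.eq_or_lt with rfl | hct
  · exact h
  by_contra hc'
  have habove := hco.plusAbove_of_not_plusBelow hB hc hc'
  have hle := hco.card_add_card_le B h habove fun x _ x' hx' heq => by
    have hx'c : x' = c := by
      have : c ∈ insert x' (B.erase c) := heq ▸ mem_insert_of_mem (mem_erase.mpr ⟨hct.ne, hc⟩)
      rcases mem_insert.mp this with h' | h'
      · exact h'.symm
      · exact absurd h' (notMem_erase c B)
    rw [heq, hx'c, insert_erase hc]
  have hge := sub_card_add_two_le (hco.1 B hB).1 ht hc hct.le
  rw [(hco.1 B hB).2] at hge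
  omega

/-- The count of `plusBelow_of_le`; agreement on one side of `c` leaves at most one common set. -/
theorem IsCoSignotope.not_plusBelow_of_plusAbove (hco : IsCoSignotope n d τ)
    (hp : plusCount τ + d ≤ n) (hB : τ B = true) (hB' : τ B' = true) (hc : c ∈ B) (hc' : c ∈ B')
    (hagree : (∀ x, c ≤ x → (x ∈ B ↔ x ∈ B')) ∨ (∀ x, x ≤ c → (x ∈ B ↔ x ∈ B')))
    (habove : PlusAbove n τ (B'.erase c) c) : ¬ PlusBelow τ (B.erase c) c := by
  intro hbelow
  rcases hagree with hagree | hagree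
  · have hle := hco.card_add_card_le B' hbelow habove fun x hx x' hx' heq => by
      have hxc := (mem_Icc.mp (mem_sdiff.mp hx).1).2
      have hcx' := (mem_Icc.mp (mem_sdiff.mp hx').1).1
      rw [heq, eq_of_insert_erase_eq (mem_sdiff.mp hx').2 (hagree x' hcx').mp (by omega) heq,
        insert_erase hc']
    have hset : Icc c n \ B'.erase c = Icc c n \ B.erase c := by
      ext x
      simp only [mem_sdiff, mem_erase, mem_Icc, and_congr_right_iff]
      intro hx
      rw [hagree x hx.1]
    have hge := sub_card_add_two_le (hco.1 B hB).1 hc hc le_rfl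
    rw [(hco.1 B hB).2, ← hset] at hge
    omega
  · have hle := hco.card_add_card_le B hbelow habove fun x hx x' hx' heq => by
      have hxc := (mem_Icc.mp (mem_sdiff.mp hx).1).2
      have hcx' := (mem_Icc.mp (mem_sdiff.mp hx').1).1
      rw [eq_of_insert_erase_eq (mem_sdiff.mp hx).2 (hagree x hxc).mpr (by omega) heq.symm,
        insert_erase hc]
    have hset : Icc 1 c \ B.erase c = Icc 1 c \ B'.erase c := by
      ext x
      simp only [mem_sdiff, mem_erase, mem_Icc, and_congr_right_iff]
      intro hx
      rw [hagree x hx.2]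
    have hge := sub_card_add_two_le (hco.1 B' hB').1 hc' hc' le_rfl
    rw [(hco.1 B' hB').2, ← hset] at hge
    omega


theorem IsCoSignotope.plusBelow_of_agree (hco : IsCoSignotope n d τ) (hp : plusCount τ + d ≤ n)
    (hB : τ B = true) (hB' : τ B' = true) (hc : c ∈ B) (hc' : c ∈ B')
    (hagree : (∀ x, c ≤ x → (x ∈ B ↔ x ∈ B')) ∨ (∀ x, x ≤ c → (x ∈ B ↔ x ∈ B')))
    (h : PlusBelow τ (B.erase c) c) : PlusBelow τ (B'.erase c) c :=
  hco.plusBelow_of_not_plusAbove hB' hc' fun habove =>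
    hco.not_plusBelow_of_plusAbove hp hB hB' hc hc' hagree habove h

theorem IsCoSignotope.plusAbove_of_agree (hco : IsCoSignotope n d τ) (hp : plusCount τ + d ≤ n)
    (hB : τ B = true) (hB' : τ B' = true) (hc : c ∈ B) (hc' : c ∈ B')
    (hagree : (∀ x, c ≤ x → (x ∈ B ↔ x ∈ B')) ∨ (∀ x, x ≤ c → (x ∈ B ↔ x ∈ B')))
    (h : PlusAbove n τ (B.erase c) c) : PlusAbove n τ (B'.erase c) c :=
  hco.plusAbove_of_not_plusBelow hB' hc' fun hbelow =>
    hco.not_plusBelow_of_plusAbove hp hB' hB hc' hc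
      (hagree.imp (fun h x hx => (h x hx).symm) fun h x hx => (h x hx).symm) h hbelow

theorem agree_insert_erase {q y : ℕ} (hcq : c ≠ q) (hcy : c ≠ y) (hside : q < c ↔ y < c) :
    (∀ x, c ≤ x → (x ∈ B ↔ x ∈ insert y (B.erase q))) ∨
      (∀ x, x ≤ c → (x ∈ B ↔ x ∈ insert y (B.erase q))) := by
  by_cases hq : q < c
  · left
    intro x hx
    simp [mem_insert, mem_erase, show x ≠ y by omega, show x ≠ q by omega]
  · right
    intro x hx
    simp [mem_insert, mem_erase, show x ≠ y by omega, show x ≠ q by omega]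

theorem IsCoSignotope.gAdj_insert_erase (hco : IsCoSignotope n d τ) (hB : τ B = true) {q y : ℕ}
    (hB' : τ (insert y (B.erase q)) = true) (hq : q ∈ B) (hy : y ∉ B)
    (hqy : y = q + 1 ∨ q = y + 1) : GAdj n d (insert y (B.erase q)) B :=
  ⟨(hco.1 _ hB').1, (hco.1 _ hB').2, (hco.1 B hB).1, (hco.1 B hB).2, y, mem_insert_self _ _, q,
    (hco.1 B hB).1 hq, by simp [mem_insert, mem_erase]; omega,
    by rw [erase_insert fun h => hy (mem_of_mem_erase h), insert_erase hq], fun _ _ => by omega⟩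

end Crossing

theorem eq_Icc_one_card {P : Finset ℕ} (h0 : 0 ∉ P) (hpred : ∀ y, y + 1 ∈ P → 1 ≤ y → y ∈ P) :
    P = Icc 1 #P := by
  have hdown : ∀ k y, y + k ∈ P → 1 ≤ y → y ∈ P := by
    intro k
    induction k with
    | zero => exact fun y hy _ => hy
    | succ k ih => exact fun y hy h1 => ih y (hpred (y + k) hy (by omega)) h1
  refine eq_of_subset_of_card_le (fun x hx => ?_) (by simp)
  have hx1 : 1 ≤ x := Nat.one_le_iff_ne_zero.mpr fun h => h0 (h ▸ hx)
  have hsub : Icc 1 x ⊆ P := fun y hy => by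
    obtain ⟨h1, h2⟩ := mem_Icc.mp hy
    exact hdown (x - y) y (by rwa [Nat.add_sub_cancel' h2]) h1
  have := card_le_card hsub
  rw [Nat.card_Icc] at this
  exact mem_Icc.mpr ⟨hx1, by omega⟩

theorem eq_Icc_sub_card {Q : Finset ℕ} {n : ℕ} (hn : ∀ x ∈ Q, x ≤ n)
    (hsucc : ∀ x ∈ Q, x + 1 ≤ n → x + 1 ∈ Q) : Q = Icc (n + 1 - #Q) n := by
  have hup : ∀ k x, x ∈ Q → x + k ≤ n → x + k ∈ Q := by
    intro k
    induction k with
    | zero => exact fun x hx _ => hx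
    | succ k ih => exact fun x hx hk => hsucc (x + k) (ih x hx (by omega)) (by omega)
  refine eq_of_subset_of_card_le (fun x hx => ?_) (by simp; omega)
  have hsub : Icc x n ⊆ Q := fun y hy => by
    obtain ⟨h1, h2⟩ := mem_Icc.mp hy
    exact Nat.add_sub_cancel' h1 ▸ hup (y - x) x hx (by omega)
  have := card_le_card hsub
  rw [Nat.card_Icc] at this
  exact mem_Icc.mpr ⟨by omega, hn x hx⟩

/-- `B` split into elements pointing down (`P`) below elements pointing up (`Q`). -/
structure RaySplit (n : ℕ) (τ : Finset ℕ → Bool) (B P Q : Finset ℕ) : Prop where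
  union_eq : P ∪ Q = B
  lt : ∀ a ∈ P, ∀ b ∈ Q, a < b
  plus : τ B = true
  below : ∀ c ∈ P, PlusBelow τ (B.erase c) c
  above : ∀ c ∈ Q, PlusAbove n τ (B.erase c) c

namespace RaySplit

variable {n d : ℕ} {τ : Finset ℕ → Bool} {B P Q : Finset ℕ}

theorem mem_of_mem_left (hs : RaySplit n τ B P Q) {c : ℕ} (hc : c ∈ P) : c ∈ B :=
  hs.union_eq ▸ mem_union_left Q hc

theorem mem_of_mem_right (hs : RaySplit n τ B P Q) {c : ℕ} (hc : c ∈ Q) : c ∈ B :=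
  hs.union_eq ▸ mem_union_right P hc

theorem moveUp (hs : RaySplit n τ B P Q) (hco : IsCoSignotope n d τ) (hp : plusCount τ + d ≤ n)
    {q : ℕ} (hq : q ∈ Q) (hqn : q + 1 ≤ n) (hqB : q + 1 ∉ B) :
    RaySplit n τ (insert (q + 1) (B.erase q)) P (insert (q + 1) (Q.erase q)) := by
  have hqP : q ∉ P := fun h => lt_irrefl q (hs.lt q h q hq)
  have hqB' : q + 1 ∉ B.erase q := fun h => hqB (mem_of_mem_erase h)
  have hplus : τ (insert (q + 1) (B.erase q)) = true :=
    hs.above q hq (q + 1) (mem_sdiff.mpr ⟨mem_Icc.mpr ⟨by omega, hqn⟩, hqB'⟩)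
  refine ⟨?_, fun a ha b hb => ?_, hplus, fun c hc => ?_, fun c hc => ?_⟩
  · rw [← hs.union_eq]
    ext x
    simp only [mem_union, mem_insert, mem_erase]
    by_cases hx : x = q <;> grind
  · rcases mem_insert.mp hb with rfl | hb
    · exact (hs.lt a ha q hq).trans (Nat.lt_succ_self q)
    · exact hs.lt a ha b (mem_of_mem_erase hb)
  · have hcq := hs.lt c hc q hq
    exact hco.plusBelow_of_agree hp hs.plus hplus (hs.mem_of_mem_left hc)
      (mem_insert_of_mem (mem_erase.mpr ⟨hcq.ne, hs.mem_of_mem_left hc⟩))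
      (agree_insert_erase hcq.ne (by omega) (by omega)) (hs.below c hc)
  · rcases mem_insert.mp hc with rfl | hc
    · rw [erase_insert hqB']
      exact (hs.above q hq).mono (Nat.le_succ q)
    · have hcq := (mem_erase.mp hc).1
      have hcB := hs.mem_of_mem_right (mem_of_mem_erase hc)
      have hcy : c ≠ q + 1 := fun h => hqB (h ▸ hcB)
      exact hco.plusAbove_of_agree hp hs.plus hplus hcB
        (mem_insert_of_mem (mem_erase.mpr ⟨hcq, hcB⟩)) (agree_insert_erase hcq hcy (by omega))
        (hs.above c (mem_of_mem_erase hc))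

theorem moveDown (hs : RaySplit n τ B P Q) (hco : IsCoSignotope n d τ)
    (hp : plusCount τ + d ≤ n) {y : ℕ} (hq : y + 1 ∈ P) (hy : 1 ≤ y) (hyB : y ∉ B) :
    RaySplit n τ (insert y (B.erase (y + 1))) (insert y (P.erase (y + 1))) Q := by
  have hqQ : y + 1 ∉ Q := fun h => lt_irrefl _ (hs.lt _ hq _ h)
  have hyB' : y ∉ B.erase (y + 1) := fun h => hyB (mem_of_mem_erase h)
  have hplus : τ (insert y (B.erase (y + 1))) = true :=
    hs.below _ hq y (mem_sdiff.mpr ⟨mem_Icc.mpr ⟨hy, by omega⟩, hyB'⟩)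
  refine ⟨?_, fun a ha b hb => ?_, hplus, fun c hc => ?_, fun c hc => ?_⟩
  · rw [← hs.union_eq]
    ext x
    simp only [mem_union, mem_insert, mem_erase]
    by_cases hx : x = y + 1 <;> grind
  · rcases mem_insert.mp ha with rfl | ha
    · exact (Nat.lt_succ_self a).trans (hs.lt _ hq b hb)
    · exact hs.lt a (mem_of_mem_erase ha) b hb
  · rcases mem_insert.mp hc with rfl | hc
    · rw [erase_insert hyB']
      exact (hs.below _ hq).mono (Nat.le_succ c)
    · have hcq := (mem_erase.mp hc).1
      have hcB := hs.mem_of_mem_left (mem_of_mem_erase hc)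
      have hcy : c ≠ y := fun h => hyB (h ▸ hcB)
      exact hco.plusBelow_of_agree hp hs.plus hplus hcB
        (mem_insert_of_mem (mem_erase.mpr ⟨hcq, hcB⟩)) (agree_insert_erase hcq hcy (by omega))
        (hs.below c (mem_of_mem_erase hc))
  · have hcq := hs.lt _ hq c hc
    exact hco.plusAbove_of_agree hp hs.plus hplus (hs.mem_of_mem_right hc)
      (mem_insert_of_mem (mem_erase.mpr ⟨hcq.ne', hs.mem_of_mem_right hc⟩))
      (agree_insert_erase hcq.ne' (by omega) (by omega)) (hs.above c hc)

theorem eq_sourceSubset (hs : RaySplit n τ B P Q) (hco : IsCoSignotope n d τ)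
    (hup : ∀ q ∈ Q, q + 1 ≤ n → q + 1 ∈ B) (hdown : ∀ y, y + 1 ∈ P → 1 ≤ y → y ∈ B) :
    B = sourceSubset n d #P := by
  obtain ⟨hBsub, hBcard⟩ := hco.1 B hs.plus
  have hdn : d ≤ n := by simpa [hBcard] using card_le_card hBsub
  have hcard : #P + #Q = d := by
    rw [← hBcard, ← hs.union_eq,
      card_union_of_disjoint (disjoint_left.mpr fun a ha hb => lt_irrefl a (hs.lt a ha a hb))]
  have hP : P = Icc 1 #P := by
    refine eq_Icc_one_card (fun h => ?_) fun y hy h1 => ?_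
    · have := mem_Icc.mp (hBsub (hs.mem_of_mem_left h))
      omega
    · rcases mem_union.mp (hs.union_eq.symm ▸ hdown y hy h1) with h | h
      · exact h
      · exact absurd (hs.lt _ hy y h) (by omega)
  have hQ : Q = Icc (n + 1 - #Q) n := by
    refine eq_Icc_sub_card (fun x hx => (mem_Icc.mp (hBsub (hs.mem_of_mem_right hx))).2)
      fun x hx hxn => ?_
    rcases mem_union.mp (hs.union_eq.symm ▸ hup x hx hxn) with h | h
    · exact absurd (hs.lt _ h x hx) (by omega)
    · exact h
  rw [← hs.union_eq, sourceSubset, ← hP, show n - d + #P + 1 = n + 1 - #Q by omega, ← hQ]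

theorem plusConn_sourceSubset (hs : RaySplit n τ B P Q) (hco : IsCoSignotope n d τ)
    (hp : plusCount τ + d ≤ n) : plusConn n d τ (sourceSubset n d #P) B := by
  induction hw : ∑ x ∈ P, x + ∑ x ∈ Q, (n - x) using Nat.strong_induction_on
    generalizing B P Q with
  | _ w ih =>
  by_cases hup : ∃ q ∈ Q, q + 1 ≤ n ∧ q + 1 ∉ B
  · obtain ⟨q, hq, hqn, hqB⟩ := hup
    have hs' := hs.moveUp hco hp hq hqn hqB
    have hlt : ∑ x ∈ P, x + ∑ x ∈ insert (q + 1) (Q.erase q), (n - x) < w := by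
      rw [← hw, sum_insert fun h => hqB (hs.mem_of_mem_right (mem_of_mem_erase h)),
        ← add_sum_erase Q _ hq]
      omega
    exact (ih _ hlt hs' rfl).tail ⟨hs'.plus, hs.plus,
      hco.gAdj_insert_erase hs.plus hs'.plus (hs.mem_of_mem_right hq) hqB (Or.inl rfl)⟩
  by_cases hdown : ∃ y, y + 1 ∈ P ∧ 1 ≤ y ∧ y ∉ B
  · obtain ⟨y, hq, hy, hyB⟩ := hdown
    have hs' := hs.moveDown hco hp hq hy hyB
    have hyP : y ∉ P.erase (y + 1) := fun h => hyB (hs.mem_of_mem_left (mem_of_mem_erase h))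
    have hlt : ∑ x ∈ insert y (P.erase (y + 1)), x + ∑ x ∈ Q, (n - x) < w := by
      rw [← hw, sum_insert hyP, ← add_sum_erase P _ hq]
      omega
    have hconn := ih _ hlt hs' rfl
    rw [card_insert_of_notMem hyP, card_erase_add_one hq] at hconn
    exact hconn.tail ⟨hs'.plus, hs.plus,
      hco.gAdj_insert_erase hs.plus hs'.plus (hs.mem_of_mem_left hq) hyB (Or.inr rfl)⟩
  push Not at hup hdown
  rw [← hs.eq_sourceSubset hco hup hdown]
  exact .refl

end RaySplit

theorem plus_of_plusConn {n d : ℕ} {τ : Finset ℕ → Bool} {A B : Finset ℕ}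
    (h : plusConn n d τ A B) (hB : τ B = true) : τ A = true := by
  rcases h.cases_head with rfl | ⟨C, hAC, -⟩
  exacts [hB, hAC.1]

theorem IsCoSignotope.exists_raySplit {n d : ℕ} {τ : Finset ℕ → Bool} {B : Finset ℕ}
    (hco : IsCoSignotope n d τ) (hp : plusCount τ + d ≤ n) (hB : τ B = true) {i : ℕ} (hi : i ≤ d)
    (hleft : 1 ≤ i → LeftAligned (series n τ (B.erase (nthElt B i))))
    (hright : ∀ j, i < j → j ≤ d → ¬ LeftAligned (series n τ (B.erase (nthElt B j)))) :
    ∃ P Q, RaySplit n τ B P Q ∧ #P = i := by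
  obtain ⟨hBsub, hcard⟩ := hco.1 B hB
  set e := B.orderEmbOfFin hcard
  have he : ∀ k : Fin d, nthElt B (k + 1) = e k := fun k => by
    simp [nthElt, e, orderEmbOfFin_apply, hcard]
  refine ⟨(univ.filter fun k : Fin d => (k : ℕ) < i).map e.toEmbedding,
    (univ.filter fun k : Fin d => ¬ (k : ℕ) < i).map e.toEmbedding, ⟨?_, ?_, hB, ?_, ?_⟩, ?_⟩
  · rw [← map_union, filter_union_filter_not_eq, map_orderEmbOfFin_univ]
  · simp only [mem_map, mem_filter, mem_univ, true_and, RelEmbedding.coe_toEmbedding]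
    rintro _ ⟨k, hk, rfl⟩ _ ⟨k', hk', rfl⟩
    exact e.strictMono (Fin.lt_def.mpr (by omega))
  · simp only [mem_map, mem_filter, mem_univ, true_and, RelEmbedding.coe_toEmbedding]
    rintro _ ⟨k, hk, rfl⟩
    have ht : nthElt B i = e ⟨i - 1, by omega⟩ := by
      rw [← he, Nat.sub_add_cancel (by omega : 1 ≤ i)]
    exact hco.plusBelow_of_le hp hB (orderEmbOfFin_mem _ _ _) (orderEmbOfFin_mem _ _ _)
      (e.monotone (Fin.le_def.mpr (Nat.le_sub_one_of_lt hk)))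
      (hco.plusBelow_of_leftAligned hB (orderEmbOfFin_mem _ _ _) (ht ▸ hleft (by omega)))
  · simp only [mem_map, mem_filter, mem_univ, true_and, RelEmbedding.coe_toEmbedding]
    rintro _ ⟨k, hk, rfl⟩
    exact hco.plusAbove_of_not_leftAligned hB (orderEmbOfFin_mem _ _ _)
      (he k ▸ hright (k + 1) (by omega) k.2)
  · rw [card_map, Fin.card_filter_val_lt]
    omega

theorem statement7_general (n d p : ℕ) (hp : p + d ≤ n)
    (τ : Finset ℕ → Bool) (hτ : τ ∈ coSigSet n d p)
    (B : Finset ℕ) (hB : τ B = true) (i : ℕ) (hi : i ≤ d)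
    (hmax :
      (1 ≤ i ∧ LeftAligned (series n τ (B.erase (nthElt B i))) ∧
        ∀ j, i < j → j ≤ d → ¬ LeftAligned (series n τ (B.erase (nthElt B j)))) ∨
      (i = 0 ∧ ∀ j, 1 ≤ j → j ≤ d →
        ¬ LeftAligned (series n τ (B.erase (nthElt B j))))) :
    B ∈ comp n d τ i := by
  obtain ⟨hco, rfl⟩ := hτ
  have hleft : 1 ≤ i → LeftAligned (series n τ (B.erase (nthElt B i))) := fun hi1 => by
    rcases hmax with h | h
    exacts [h.2.1, absurd h.1 (by omega)]
  have hright : ∀ j, i < j → j ≤ d → ¬ LeftAligned (series n τ (B.erase (nthElt B j))) := by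
    rcases hmax with h | ⟨rfl, h⟩
    exacts [h.2.2, fun j hj => h j hj]
  obtain ⟨P, Q, hs, rfl⟩ := hco.exists_raySplit hp hB hi hleft hright
  have hconn := hs.plusConn_sourceSubset hco hp
  exact ⟨plus_of_plusConn hconn hB, hB, hconn⟩

/-- **Corollary.** Let `B` be a `+`-subset of `τ ∈ 𝒮̄_p(n,d)` and let `i` be the largest
index in `[d]` such that the `(τ,B,i)`-series is left-aligned (or `i = 0` if none exists).
Then `B ∈ 𝒞^τ_i`. -/
theorem statement7 (n d p : ℕ) (hdn : d < n) (hp1 : 1 ≤ p) (hp : p + d ≤ n)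
    (τ : Finset ℕ → Bool) (hτ : τ ∈ coSigSet n d p)
    (B : Finset ℕ) (hB : τ B = true) (i : ℕ) (hi : i ≤ d)
    (hmax :
      (1 ≤ i ∧ LeftAligned (series n τ (B.erase (nthElt B i))) ∧
        ∀ j, i < j → j ≤ d → ¬ LeftAligned (series n τ (B.erase (nthElt B j)))) ∨
      (i = 0 ∧ ∀ j, 1 ≤ j → j ≤ d →
        ¬ LeftAligned (series n τ (B.erase (nthElt B j))))) :
    B ∈ comp n d τ i :=
  statement7_general n d p hp τ hτ B hB i hi hmax
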